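/- arXiv:2112.14383 — 4 statements merged into one kernel-verified Lean document; each statement's English description precedes it below -/
import Mathlib

section
/- Let (c_k)_{k≥1} be a sequence of real numbers with c_1 > 0 and c_{k+1} > 1 for all k ≥ 1. Let (A_j)_{j≥1} be a sequence of elements of W(c_k) with A_1 ≥ A_2 ≥ ⋯ > 1. Then lim_{j→∞} A_j exists and belongs to W(c_k). -/
/-- `Cprod c k = c 1 * c 2 * ⋯ * c k`. -/
noncomputable def Cprod (c : ℕ → ℝ) (k : ℕ) : ℝ := ∏ i ∈ Finset.Icc 1 k, c i

/-- The set `W(c_k)` of `A > 1` such that `⌊A ^ (c 1 ⋯ c k)⌋` is prime for every `k ≥ 1`. -/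
noncomputable def Wset (c : ℕ → ℝ) : Set ℝ :=
  {A : ℝ | 1 < A ∧ ∀ k : ℕ, 1 ≤ k → Prime ⌊A ^ Cprod c k⌋}

/-!
Along a sequence decreasing to `L`, each `A_j ^ C_k` decreases to `L ^ C_k`, and the floor is
right-continuous, so `⌊L ^ C_k⌋ = ⌊A_j ^ C_k⌋` for large `j`; this is prime. The exponents
`C_k` are positive because `⌊A ^ C_k⌋ ≥ 2` for a single `A > 1` in `W(c_k)`, and `L ≠ 1`
because `⌊1 ^ C_k⌋ = 1` is not prime.
-/

open Filter Topology

lemma two_le_of_prime_floor {x : ℝ} (hx : 0 ≤ x) (hp : Prime ⌊x⌋) : 2 ≤ x := by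
  have h0 : 0 ≤ ⌊x⌋ := Int.floor_nonneg.2 hx
  have h2 : (2 : ℤ) ≤ ⌊x⌋ := by
    have := hp.ne_zero
    have := hp.ne_one
    omega
  calc (2 : ℝ) ≤ ⌊x⌋ := by exact_mod_cast h2
    _ ≤ x := Int.floor_le x

lemma Cprod_pos_of_mem_Wset {c : ℕ → ℝ} {A : ℝ} (hA : A ∈ Wset c) {k : ℕ} (hk : 1 ≤ k) :
    0 < Cprod c k := by
  have h2 : 2 ≤ A ^ Cprod c k :=
    two_le_of_prime_floor (Real.rpow_nonneg (by linarith [hA.1]) _) (hA.2 k hk)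
  have h1 : 1 < A ^ Cprod c k := by linarith
  rcases (Real.one_lt_rpow_iff_of_pos (by linarith [hA.1])).1 h1 with ⟨-, hC⟩ | ⟨hA1, -⟩
  · exact hC
  · exact absurd hA.1 hA1.not_gt

lemma mem_Wset_of_tendsto_nhdsWithin_Ici {ι : Type*} {l : Filter ι} [l.NeBot] {c : ℕ → ℝ}
    {A : ι → ℝ} {L : ℝ} (hlim : Tendsto A l (𝓝[≥] L)) (hA : ∀ᶠ j in l, A j ∈ Wset c) :
    L ∈ Wset c := by
  obtain ⟨j₀, hj₀⟩ := hA.exists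
  have hL : 1 ≤ L := ge_of_tendsto (hlim.mono_right nhdsWithin_le_nhds)
    (hA.mono fun j hj => hj.1.le)
  have hprime : ∀ k, 1 ≤ k → Prime ⌊L ^ Cprod c k⌋ := by
    intro k hk
    have hC := Cprod_pos_of_mem_Wset hj₀ hk
    have hpow : Tendsto (fun j => A j ^ Cprod c k) l (𝓝[≥] (L ^ Cprod c k)) := by
      refine tendsto_nhdsWithin_iff.2 ⟨?_, ?_⟩
      · exact (hlim.mono_right nhdsWithin_le_nhds).rpow_const (Or.inr hC.le)
      · filter_upwards [tendsto_nhdsWithin_iff.1 hlim |>.2] with j hj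
        exact Real.rpow_le_rpow (by linarith) hj hC.le
    have hfloor : ∀ᶠ j in l, ⌊A j ^ Cprod c k⌋ = ⌊L ^ Cprod c k⌋ :=
      tendsto_pure.1 ((tendsto_floor_right_pure_floor _).comp hpow)
    obtain ⟨j, hj, hjeq⟩ := (hA.and hfloor).exists
    exact hjeq ▸ hj.2 k hk
  refine ⟨lt_of_le_of_ne hL fun h => ?_, hprime⟩
  have := hprime 1 le_rfl
  rw [← h, Real.one_rpow, Int.floor_one] at this
  exact this.ne_one rfl

theorem limit_mem_Wset_of_antitone_general (c : ℕ → ℝ)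
    (A : ℕ → ℝ) (hA : ∀ j : ℕ, 1 ≤ j → A j ∈ Wset c)
    (hanti : ∀ j : ℕ, 1 ≤ j → A (j + 1) ≤ A j) :
    ∃ L : ℝ, Filter.Tendsto A Filter.atTop (nhds L) ∧ L ∈ Wset c := by
  set B : ℕ → ℝ := fun j => A (j + 1)
  have hB : Antitone B := antitone_nat_of_succ_le fun j => hanti (j + 1) j.succ_pos
  have hbdd : BddBelow (Set.range B) :=
    ⟨1, Set.forall_mem_range.2 fun j => (hA (j + 1) j.succ_pos).1.le⟩
  have hlimB : Tendsto B atTop (𝓝[≥] (⨅ j, B j)) :=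
    tendsto_nhdsWithin_iff.2 ⟨tendsto_atTop_ciInf hB hbdd, .of_forall (ciInf_le hbdd)⟩
  have hlim : Tendsto A atTop (𝓝[≥] (⨅ j, B j)) := (tendsto_add_atTop_iff_nat 1).1 hlimB
  refine ⟨_, hlim.mono_right nhdsWithin_le_nhds, mem_Wset_of_tendsto_nhdsWithin_Ici hlim ?_⟩
  filter_upwards [eventually_ge_atTop 1] using hA

theorem limit_mem_Wset_of_antitone (c : ℕ → ℝ) (h1 : 0 < c 1)
    (h2 : ∀ k : ℕ, 1 ≤ k → 1 < c (k + 1))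
    (A : ℕ → ℝ) (hA : ∀ j : ℕ, 1 ≤ j → A j ∈ Wset c)
    (hanti : ∀ j : ℕ, 1 ≤ j → A (j + 1) ≤ A j)
    (hgt : ∀ j : ℕ, 1 ≤ j → 1 < A j) :
    ∃ L : ℝ, Filter.Tendsto A Filter.atTop (nhds L) ∧ L ∈ Wset c :=
  limit_mem_Wset_of_antitone_general c A hA hanti
end

section
/- Let (c_k)_{k≥1} be a sequence of real numbers with c_1 > 0 and c_{k+1} > 1 for all k ≥ 1, and suppose that for every k ≥ 1 there exists an integer ν > k such that the product c_{k+1}·c_{k+2}⋯c_ν is a positive integer. Let (A_j)_{j≥1} be a bounded sequence of elements of W(c_k) with A_1 ≤ A_2 ≤ ⋯. Then lim_{j→∞} A_j exists and belongs to W(c_k). -/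
open Filter Topology

lemma Int.not_prime_pow_sub_one_of_prime_sub_one {n : ℤ} {m : ℕ} (hn : 0 ≤ n) (hm : 2 ≤ m)
    (hp : Prime (n - 1)) : ¬ Prime (n ^ m - 1) := by
  intro hq
  have hn3 : 3 ≤ n := by
    have hunit := hp.not_isUnit
    rw [Int.isUnit_iff] at hunit
    have := hp.ne_zero
    omega
  have hlt : n < n ^ m :=
    calc n < n ^ 2 := by nlinarith
      _ ≤ n ^ m := pow_le_pow_right₀ (by omega) hm
  have hdvd : n - 1 ∣ n ^ m - 1 := by simpa using sub_dvd_pow_sub_pow n 1 m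
  rcases Int.associated_iff.1 ((hp.dvd_prime_iff_associated hq).1 hdvd) with h | h <;> linarith

lemma Filter.Tendsto.eventually_floor_eq_ceil_sub_one {ι : Type*} {l : Filter ι} {f : ι → ℝ}
    {x : ℝ} (hf : Tendsto f l (𝓝 x)) (hlt : ∀ᶠ i in l, f i < x) :
    ∀ᶠ i in l, ⌊f i⌋ = ⌈x⌉ - 1 := by
  have hceil : ((⌈x⌉ - 1 : ℤ) : ℝ) < x := by
    push_cast
    linarith [Int.ceil_lt_add_one x]
  filter_upwards [hf.eventually (eventually_gt_nhds hceil), hlt] with i hgt hlt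
  rw [Int.floor_eq_iff]
  push_cast at hgt ⊢
  constructor <;> linarith [Int.le_ceil x]

section Cprod

variable {c : ℕ → ℝ}

lemma one_lt_apply_of_two_le (h2 : ∀ k : ℕ, 1 ≤ k → 1 < c (k + 1)) {i : ℕ} (hi : 2 ≤ i) :
    1 < c i := by
  obtain ⟨k, rfl⟩ := Nat.exists_eq_add_of_le' hi
  exact h2 (k + 1) (by omega)

lemma Cprod_pos (h1 : 0 < c 1) (h2 : ∀ k : ℕ, 1 ≤ k → 1 < c (k + 1)) (k : ℕ) :
    0 < Cprod c k := by
  refine Finset.prod_pos fun i hi => ?_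
  rcases (Finset.mem_Icc.1 hi).1.eq_or_lt with rfl | hi
  · exact h1
  · exact one_pos.trans (one_lt_apply_of_two_le h2 hi)

lemma Cprod_mul_prod_Icc (c : ℕ → ℝ) {k ν : ℕ} (h : k ≤ ν) :
    Cprod c k * ∏ i ∈ Finset.Icc (k + 1) ν, c i = Cprod c ν := by
  have := Finset.prod_Ioc_consecutive c (Nat.zero_le k) h
  simpa only [Cprod, ← Finset.Icc_add_one_left_eq_Ioc, zero_add] using this

lemma one_lt_prod_Icc (h2 : ∀ k : ℕ, 1 ≤ k → 1 < c (k + 1)) {k ν : ℕ} (hk : 1 ≤ k)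
    (hkν : k < ν) : 1 < ∏ i ∈ Finset.Icc (k + 1) ν, c i := by
  have hne : (Finset.Icc (k + 1) ν).Nonempty := Finset.nonempty_Icc.2 hkν
  simpa using Finset.prod_lt_prod_of_nonempty (f := fun _ => (1 : ℝ)) (fun _ _ => one_pos)
    (fun i hi => one_lt_apply_of_two_le h2 (by linarith [(Finset.mem_Icc.1 hi).1])) hne

lemma prime_ceil_rpow_Cprod_sub_one {A : ℕ → ℝ} {L : ℝ} (hA : ∀ᶠ j in atTop, A j ∈ Wset c)
    (hlim : Tendsto A atTop (𝓝 L)) (hlt : ∀ᶠ j in atTop, A j < L) {k : ℕ} (hk : 1 ≤ k)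
    (hC : 0 < Cprod c k) : Prime (⌈L ^ Cprod c k⌉ - 1) := by
  have hpow : Tendsto (fun j => A j ^ Cprod c k) atTop (𝓝 (L ^ Cprod c k)) :=
    hlim.rpow_const (Or.inr hC.le)
  have hpow_lt : ∀ᶠ j in atTop, A j ^ Cprod c k < L ^ Cprod c k := by
    filter_upwards [hA, hlt] with j hAj hj
    exact Real.rpow_lt_rpow (zero_le_one.trans hAj.1.le) hj hC
  obtain ⟨j, hAj, hfloor⟩ := (hA.and (hpow.eventually_floor_eq_ceil_sub_one hpow_lt)).exists
  exact hfloor ▸ hAj.2 k hk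

lemma rpow_Cprod_notMem_range_intCast (h2 : ∀ k : ℕ, 1 ≤ k → 1 < c (k + 1))
    (h3 : ∀ k : ℕ, 1 ≤ k → ∃ ν : ℕ, k < ν ∧
      ∃ m : ℕ, 0 < m ∧ (∏ i ∈ Finset.Icc (k + 1) ν, c i) = (m : ℝ))
    {L : ℝ} (hL : 0 ≤ L) (hprime : ∀ k : ℕ, 1 ≤ k → Prime (⌈L ^ Cprod c k⌉ - 1)) {k : ℕ}
    (hk : 1 ≤ k) : L ^ Cprod c k ∉ Set.range Int.cast := by
  rintro ⟨n, hn⟩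
  obtain ⟨ν, hkν, m, -, hm⟩ := h3 k hk
  have hm2 : 2 ≤ m := by
    have : (1 : ℝ) < m := hm ▸ one_lt_prod_Icc h2 hk hkν
    exact_mod_cast this
  have hν : L ^ Cprod c ν = ((n ^ m : ℤ) : ℝ) := by
    rw [← Cprod_mul_prod_Icc c hkν.le, hm, Real.rpow_mul hL, ← hn, Real.rpow_natCast]
    push_cast
    rfl
  have hn0 : 0 ≤ n := by exact_mod_cast hn ▸ Real.rpow_nonneg hL (Cprod c k)
  refine Int.not_prime_pow_sub_one_of_prime_sub_one hn0 hm2 ?_ ?_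
  · simpa [← hn] using hprime k hk
  · simpa only [hν, Int.ceil_intCast] using hprime ν (hk.trans hkν.le)

theorem mem_Wset_of_tendsto_of_lt (h1 : 0 < c 1) (h2 : ∀ k : ℕ, 1 ≤ k → 1 < c (k + 1))
    (h3 : ∀ k : ℕ, 1 ≤ k → ∃ ν : ℕ, k < ν ∧
      ∃ m : ℕ, 0 < m ∧ (∏ i ∈ Finset.Icc (k + 1) ν, c i) = (m : ℝ))
    {A : ℕ → ℝ} {L : ℝ} (hA : ∀ᶠ j in atTop, A j ∈ Wset c) (hlim : Tendsto A atTop (𝓝 L))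
    (hlt : ∀ᶠ j in atTop, A j < L) : L ∈ Wset c := by
  obtain ⟨j, hAj, hjL⟩ := (hA.and hlt).exists
  have hL : 1 < L := hAj.1.trans hjL
  have hprime k (hk : 1 ≤ k) : Prime (⌈L ^ Cprod c k⌉ - 1) :=
    prime_ceil_rpow_Cprod_sub_one hA hlim hlt hk (Cprod_pos h1 h2 k)
  refine ⟨hL, fun k hk => ?_⟩
  have hceil := (Int.ceil_eq_floor_add_one_iff_notMem _).2
    (rpow_Cprod_notMem_range_intCast h2 h3 (by linarith) hprime hk)
  simpa [hceil] using hprime k hk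

end Cprod

lemma exists_tendsto_of_le_succ_of_bddAbove {A : ℕ → ℝ} {n₀ : ℕ}
    (hmono : ∀ j : ℕ, n₀ ≤ j → A j ≤ A (j + 1)) (hbdd : ∃ M : ℝ, ∀ j : ℕ, n₀ ≤ j → A j ≤ M) :
    ∃ L : ℝ, Tendsto A atTop (𝓝 L) ∧ ∀ j : ℕ, n₀ ≤ j → A j ≤ L := by
  set B : ℕ → ℝ := fun j => A (j + n₀)
  have hBmono : Monotone B := monotone_nat_of_le_succ fun j => by
    simpa [B, add_right_comm] using hmono (j + n₀) (by omega)
  obtain ⟨M, hM⟩ := hbdd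
  have hBbdd : BddAbove (Set.range B) := ⟨M, by rintro _ ⟨j, rfl⟩; exact hM _ (by omega)⟩
  have hBlim := tendsto_atTop_ciSup hBmono hBbdd
  refine ⟨_, (tendsto_add_atTop_iff_nat n₀).1 hBlim, fun j hj => ?_⟩
  obtain ⟨i, rfl⟩ := Nat.exists_eq_add_of_le' hj
  exact hBmono.ge_of_tendsto hBlim i

theorem limit_mem_Wset_of_monotone (c : ℕ → ℝ) (h1 : 0 < c 1)
    (h2 : ∀ k : ℕ, 1 ≤ k → 1 < c (k + 1))
    (h3 : ∀ k : ℕ, 1 ≤ k → ∃ ν : ℕ, k < ν ∧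
      ∃ m : ℕ, 0 < m ∧ (∏ i ∈ Finset.Icc (k + 1) ν, c i) = (m : ℝ))
    (A : ℕ → ℝ) (hA : ∀ j : ℕ, 1 ≤ j → A j ∈ Wset c)
    (hmono : ∀ j : ℕ, 1 ≤ j → A j ≤ A (j + 1))
    (hbdd : ∃ M : ℝ, ∀ j : ℕ, 1 ≤ j → A j ≤ M) :
    ∃ L : ℝ, Filter.Tendsto A Filter.atTop (nhds L) ∧ L ∈ Wset c := by
  obtain ⟨L, hlim, hle⟩ := exists_tendsto_of_le_succ_of_bddAbove hmono hbdd
  refine ⟨L, hlim, ?_⟩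
  by_cases hattained : ∃ j, 1 ≤ j ∧ A j = L
  · obtain ⟨j, hj, rfl⟩ := hattained
    exact hA j hj
  push Not at hattained
  exact mem_Wset_of_tendsto_of_lt h1 h2 h3 (eventually_atTop.2 ⟨1, hA⟩) hlim
    (eventually_atTop.2 ⟨1, fun j hj => (hle j hj).lt_of_ne (hattained j hj)⟩)
end

section
/- Let (c_k)_{k≥1} be a sequence of real numbers with c_1 > 0 and c_{k+1} an integer with c_{k+1} ≥ 2 for all k ≥ 1. Let A ∈ W(c_k) and set p_k = ⌊A^{C_k}⌋ for all k ≥ 1. Then for every k ≥ 1, p_k^{c_{k+1}} ≤ p_{k+1} < (p_k + 1)^{c_{k+1}} − 1. -/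
/-! With `x = A ^ C_k` and `n = c_{k+1}` we have `p_k = ⌊x⌋` and `p_{k+1} = ⌊x ^ n⌋`, so
`p_k ^ n ≤ p_{k+1} < (p_k + 1) ^ n` by monotonicity of `t ↦ t ^ n`. The value
`(p_k + 1) ^ n - 1` is never attained: it is divisible by `(p_k + 1) - 1 = p_k`, and
`2 ≤ p_k < p_{k+1}`, whereas `p_{k+1}` is prime. -/

theorem Int.not_prime_of_dvd_of_lt {a q : ℤ} (hdvd : a ∣ q) (ha : 2 ≤ a) (hlt : a < q) :
    ¬Prime q := by
  rw [Int.prime_iff_natAbs_prime]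
  exact Nat.not_prime_of_dvd_of_lt (Int.natAbs_dvd_natAbs.2 hdvd) (by omega) (by omega)

theorem Int.two_le_of_prime_of_nonneg {a : ℤ} (hp : Prime a) (ha : 0 ≤ a) : 2 ≤ a := by
  have := (Int.prime_iff_natAbs_prime.1 hp).two_le
  omega

section FloorPow

variable {R : Type*} [Ring R] [LinearOrder R] [IsStrictOrderedRing R] [FloorRing R]
  {x : R} {n : ℕ}

theorem Int.floor_pow_le_floor_pow (hx : 0 ≤ x) (n : ℕ) : ⌊x⌋ ^ n ≤ ⌊x ^ n⌋ :=
  Int.le_floor.2 <| by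
    push_cast
    exact pow_le_pow_left₀ (Int.cast_nonneg_iff.2 (Int.floor_nonneg.2 hx)) (Int.floor_le x) n

theorem Int.floor_pow_lt_floor_add_one_pow (hx : 0 ≤ x) (hn : n ≠ 0) :
    ⌊x ^ n⌋ < (⌊x⌋ + 1) ^ n :=
  Int.floor_lt.2 <| by
    push_cast
    exact pow_lt_pow_left₀ (Int.lt_floor_add_one x) hx hn

theorem Int.floor_pow_lt_floor_add_one_pow_sub_one (hx : 0 ≤ x) (hn : 2 ≤ n)
    (hp : Prime ⌊x⌋) (hq : Prime ⌊x ^ n⌋) : ⌊x ^ n⌋ < (⌊x⌋ + 1) ^ n - 1 := by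
  have h2 : 2 ≤ ⌊x⌋ := Int.two_le_of_prime_of_nonneg hp (Int.floor_nonneg.2 hx)
  have hlt : ⌊x⌋ < ⌊x ^ n⌋ :=
    calc ⌊x⌋ < ⌊x⌋ ^ n := lt_self_pow₀ (by omega) (by omega)
      _ ≤ ⌊x ^ n⌋ := Int.floor_pow_le_floor_pow hx n
  have hne : ⌊x ^ n⌋ ≠ (⌊x⌋ + 1) ^ n - 1 := by
    intro heq
    have hdvd : ⌊x⌋ ∣ ⌊x ^ n⌋ := by
      simpa [heq] using sub_one_dvd_pow_sub_one (⌊x⌋ + 1) n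
    exact Int.not_prime_of_dvd_of_lt hdvd h2 hlt hq
  have := Int.floor_pow_lt_floor_add_one_pow hx (n := n) (by omega)
  omega

end FloorPow

theorem Cprod_succ (c : ℕ → ℝ) (k : ℕ) : Cprod c (k + 1) = Cprod c k * c (k + 1) :=
  Finset.prod_Icc_succ_top (by omega) c

theorem pk_pow_le_pk_succ_general (c : ℕ → ℝ)
    (h2 : ∀ k : ℕ, 1 ≤ k → (∃ m : ℤ, c (k + 1) = (m : ℝ)) ∧ 2 ≤ c (k + 1))
    (A : ℝ) (hA : A ∈ Wset c)
    (p : ℕ → ℤ) (hp : ∀ k : ℕ, 1 ≤ k → p k = ⌊A ^ Cprod c k⌋) :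
    ∀ k : ℕ, 1 ≤ k →
      (p k : ℝ) ^ c (k + 1) ≤ (p (k + 1) : ℝ) ∧
      (p (k + 1) : ℝ) < ((p k : ℝ) + 1) ^ c (k + 1) - 1 := by
  intro k hk
  obtain ⟨hA1, hprime⟩ := hA
  obtain ⟨⟨m, hm⟩, hc2⟩ := h2 k hk
  obtain ⟨n, rfl⟩ : ∃ n : ℕ, m = n :=
    Int.eq_ofNat_of_zero_le (by exact_mod_cast (hm ▸ hc2).trans' zero_le_two)
  rw [Int.cast_natCast] at hm
  have hn : 2 ≤ n := by exact_mod_cast hm ▸ hc2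
  set x := A ^ Cprod c k
  have hx : 0 ≤ x := Real.rpow_nonneg (by linarith) _
  have hx_succ : A ^ Cprod c (k + 1) = x ^ n := by
    rw [Cprod_succ, Real.rpow_mul (by linarith), hm, Real.rpow_natCast]
  have hpk : Prime ⌊x⌋ := hprime k hk
  have hpk_succ : Prime ⌊x ^ n⌋ := hx_succ ▸ hprime (k + 1) (by omega)
  rw [hp k hk, hp (k + 1) (by omega), hx_succ, hm, Real.rpow_natCast, Real.rpow_natCast]
  exact ⟨by exact_mod_cast Int.floor_pow_le_floor_pow hx n,
    by exact_mod_cast Int.floor_pow_lt_floor_add_one_pow_sub_one hx hn hpk hpk_succ⟩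

theorem pk_pow_le_pk_succ (c : ℕ → ℝ) (h1 : 0 < c 1)
    (h2 : ∀ k : ℕ, 1 ≤ k → (∃ m : ℤ, c (k + 1) = (m : ℝ)) ∧ 2 ≤ c (k + 1))
    (A : ℝ) (hA : A ∈ Wset c)
    (p : ℕ → ℤ) (hp : ∀ k : ℕ, 1 ≤ k → p k = ⌊A ^ Cprod c k⌋) :
    ∀ k : ℕ, 1 ≤ k →
      (p k : ℝ) ^ c (k + 1) ≤ (p (k + 1) : ℝ) ∧
      (p (k + 1) : ℝ) < ((p k : ℝ) + 1) ^ c (k + 1) - 1 :=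
  pk_pow_le_pk_succ_general c h2 A hA p hp
end

section
/- Let D ≥ 2 be an integer. Then for every prime number p, there exists a prime factor q of D such that D/q ≤ ord((p+1)^{1/D}) ≤ D, where (p+1)^{1/D} denotes the positive real D-th root of p+1. -/
/-!
Let `α = (p + 1) ^ (1 / D)` and `d = ordQ α`. Since the exponents `n` with `α ^ n ∈ ℚ` are closed
under reduction modulo `d`, `d ∣ D`, say `D = d * k`. The rational number `α ^ d` has `k`-th power
`p + 1`, so it is a natural number `m`, and `m ^ k - 1 = p` is prime. Hence either `k = 1`, i.e.
`d = D`, or `k` is a prime factor of `D` with `D / k = d`.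
-/

/-- The least positive integer `n` such that `α ^ n` is rational. -/
noncomputable def ordQ (α : ℝ) : ℕ := sInf {n : ℕ | 0 < n ∧ ∃ q : ℚ, α ^ n = (q : ℝ)}

section ordQ

variable {α : ℝ} {n : ℕ} {q : ℚ}

theorem ordQ_le (hn : 0 < n) (h : α ^ n = q) : ordQ α ≤ n :=
  Nat.sInf_le ⟨hn, q, h⟩

theorem ordQ_pos_and_exists_pow_ordQ_eq (hn : 0 < n) (h : α ^ n = q) :
    0 < ordQ α ∧ ∃ r : ℚ, α ^ ordQ α = r :=
  Nat.sInf_mem (s := {n : ℕ | 0 < n ∧ ∃ q : ℚ, α ^ n = (q : ℝ)}) ⟨n, hn, q, h⟩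

theorem ordQ_dvd (hα : α ≠ 0) (hn : 0 < n) (h : α ^ n = q) : ordQ α ∣ n := by
  obtain ⟨hd, r, hr⟩ := ordQ_pos_and_exists_pow_ordQ_eq hn h
  refine Nat.dvd_of_mod_eq_zero (by_contra fun hmod => ?_)
  have hrem : α ^ (n % ordQ α) = ((q / r ^ (n / ordQ α) : ℚ) : ℝ) := by
    have hsplit : α ^ n = (α ^ ordQ α) ^ (n / ordQ α) * α ^ (n % ordQ α) := by
      rw [← pow_mul, ← pow_add, Nat.div_add_mod]
    rw [Rat.cast_div, Rat.cast_pow, ← h, ← hr, eq_div_iff (pow_ne_zero _ (pow_ne_zero _ hα)), hsplit,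
      mul_comm]
  exact (ordQ_le (Nat.pos_of_ne_zero hmod) hrem).not_gt (Nat.mod_lt n hd)

theorem exists_pow_ordQ_eq_natCast (hα : 0 < α) (hn : 0 < n) {N : ℕ} (h : α ^ n = N) :
    ∃ m : ℕ, α ^ ordQ α = m := by
  have h' : α ^ n = ((N : ℚ) : ℝ) := by rw [h, Rat.cast_natCast]
  obtain ⟨k, hk⟩ := ordQ_dvd hα.ne' hn h'
  obtain ⟨-, r, hr⟩ := ordQ_pos_and_exists_pow_ordQ_eq hn h'
  have hrk : (r : ℝ) ^ k = ((N : ℤ) : ℝ) := by rw [← hr, ← pow_mul, ← hk, h, Int.cast_natCast]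
  have hk0 : 0 < k := Nat.pos_of_ne_zero (by rintro rfl; omega)
  obtain ⟨y, hy⟩ : ∃ y : ℤ, (r : ℝ) = y := by
    by_contra hint
    exact (irrational_nrt_of_notint_nrt k N hrk hint hk0).ne_rat r rfl
  have hy0 : (0 : ℝ) ≤ y := hy ▸ hr ▸ (pow_pos hα _).le
  refine ⟨y.toNat, ?_⟩
  rw [hr, hy, ← Int.cast_natCast, Int.toNat_of_nonneg (by exact_mod_cast hy0)]

end ordQ

theorem eq_one_or_prime_of_pow_eq_succ_prime {m k p : ℕ} (hp : p.Prime) (h : m ^ k = p + 1) :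
    k = 1 ∨ k.Prime := by
  rcases eq_or_ne k 1 with hk | hk
  · exact .inl hk
  · exact .inr (Nat.prime_of_pow_sub_one_prime hk (by rwa [h, Nat.add_sub_cancel])).2

theorem ordQ_root_succ_prime (D : ℕ) (hD : 2 ≤ D) (p : ℕ) (hp : p.Prime) :
    ∃ q : ℕ, q.Prime ∧ q ∣ D ∧
      D / q ≤ ordQ (((p : ℝ) + 1) ^ ((1 : ℝ) / (D : ℝ))) ∧
      ordQ (((p : ℝ) + 1) ^ ((1 : ℝ) / (D : ℝ))) ≤ D := by
  set α : ℝ := ((p : ℝ) + 1) ^ ((1 : ℝ) / (D : ℝ)) with hα_def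
  have hα : 0 < α := by positivity
  have hD0 : 0 < D := by omega
  have hαD : α ^ D = ((p + 1 : ℕ) : ℝ) := by
    rw [hα_def, one_div, Real.rpow_inv_natCast_pow (by positivity) hD0.ne', Nat.cast_succ]
  have hαD' : α ^ D = (((p + 1 : ℕ) : ℚ) : ℝ) := by rw [hαD, Rat.cast_natCast]
  have hle : ordQ α ≤ D := ordQ_le hD0 hαD'
  obtain ⟨k, hk⟩ := ordQ_dvd hα.ne' hD0 hαD'
  obtain ⟨m, hm⟩ := exists_pow_ordQ_eq_natCast hα hD0 hαD
  have hmk : m ^ k = p + 1 := by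
    exact_mod_cast (show (m : ℝ) ^ k = ((p + 1 : ℕ) : ℝ) by rw [← hm, ← pow_mul, ← hk, hαD])
  rcases eq_one_or_prime_of_pow_eq_succ_prime hp hmk with rfl | hk_prime
  · exact ⟨D.minFac, Nat.minFac_prime (by omega), Nat.minFac_dvd D,
      (Nat.div_le_self _ _).trans (by omega), hle⟩
  · refine ⟨k, hk_prime, Dvd.intro_left _ hk.symm, ?_, hle⟩
    rw [hk, Nat.mul_div_cancel _ hk_prime.pos]
end
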